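/- Let Q_1,…,Q_r ∈ ℂ[x_1,…,x_r] be algebraically independent polynomials such that ℂ[x_1,…,x_r] is a free module of finite rank N over the ℂ-subalgebra generated by Q_1,…,Q_r. Let G be a finite group of linear automorphisms of ℂ^r such that each Q_i is G-invariant, i.e. Q_i(g·x) = Q_i(x) as polynomials for every g ∈ G, and suppose N = |G|·d. Let a ∈ ℂ^r be such that the Jacobian determinant det[∂Q_i/∂x_j] is nonzero at every point of the fiber F = {b ∈ ℂ^r : Q_i(b) = a_i for all i}. Then F contains d points b_1,…,b_d lying in pairwise distinct G-orbits. -/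

import Mathlib

/-!
The ideal `I = (Q₁ - a₁, …, Q_r - a_r)` is the extension to `ℂ[x]` of the kernel of the character
`Q_i ↦ a_i` of `ℂ[Q] ≅ ℂ[y]`, so the images of the basis `B` form a ℂ-basis of `ℂ[x] ⧸ I`, which
has dimension `N`. Taylor expansion at a point `b` of the fiber `F` turns the invertibility of the
Jacobian into `𝔪_b ≤ I + 𝔪_b²`. By the Nullstellensatz and the Chinese remainder theorem `√I` is
the product of the `𝔪_b`, so `√I ≤ I + (√I)²`, hence `√I ≤ I + (√I)ⁿ = I` for large `n`. Thus `I`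
is radical, evaluation on `F` embeds `ℂ[x] ⧸ I` into `ℂ^F`, and `|F| ≥ N = |G| d`. Each orbit
meets `F` in at most `|G|` points, so at least `d` orbits meet `F`.
-/

open MvPolynomial Matrix

namespace Ideal

variable {R : Type*} [CommRing R] {I J K : Ideal R}

theorem sup_mul_sup_le_sup_mul : (I ⊔ J) * (I ⊔ K) ≤ I ⊔ J * K := by
  rw [sup_mul, mul_sup, mul_sup]
  exact sup_le (sup_le (mul_le_left.trans le_sup_left) (mul_le_left.trans le_sup_left))
    (sup_le (mul_le_right.trans le_sup_left) le_sup_right)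

theorem mul_le_sup_sq (hJ : J ≤ I ⊔ J ^ 2) (hK : K ≤ I ⊔ K ^ 2) :
    J * K ≤ I ⊔ (J * K) ^ 2 :=
  (mul_mono hJ hK).trans <| sup_mul_sup_le_sup_mul.trans_eq <| by rw [mul_pow]

theorem prod_le_sup_sq {ι : Type*} (s : Finset ι) {M : ι → Ideal R}
    (hM : ∀ i ∈ s, M i ≤ I ⊔ M i ^ 2) : ∏ i ∈ s, M i ≤ I ⊔ (∏ i ∈ s, M i) ^ 2 :=
  Finset.prod_induction M (fun J => J ≤ I ⊔ J ^ 2) (fun _ _ => mul_le_sup_sq)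
    (by rw [one_pow]; exact le_sup_right) hM

theorem le_sup_pow_of_le_sup_sq (hJ : J ≤ I ⊔ J ^ 2) : ∀ n : ℕ, J ≤ I ⊔ J ^ (n + 1)
  | 0 => by rw [zero_add, pow_one]; exact le_sup_right
  | n + 1 =>
    calc J ≤ I ⊔ J * J := by rwa [← sq]
      _ ≤ I ⊔ J * (I ⊔ J ^ (n + 1)) :=
        sup_le_sup_left (mul_mono_right (le_sup_pow_of_le_sup_sq hJ n)) _
      _ ≤ I ⊔ J ^ (n + 1 + 1) := by
        rw [mul_sup, ← pow_succ']
        exact sup_le le_sup_left (sup_le (mul_le_right.trans le_sup_left) le_sup_right)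

theorem isRadical_of_radical_le_sup_sq [IsNoetherianRing R]
    (h : I.radical ≤ I ⊔ I.radical ^ 2) : I.IsRadical := by
  obtain ⟨n, hn⟩ := exists_radical_pow_le_of_fg I (IsNoetherian.noetherian _)
  calc I.radical ≤ I ⊔ I.radical ^ (n + 1) := le_sup_pow_of_le_sup_sq h n
    _ ≤ I := sup_le le_rfl ((pow_le_pow_right n.le_succ).trans hn)

end Ideal

namespace Module.Basis

theorem mem_ideal_smul_top_iff {A M ι : Type*} [CommRing A] [AddCommGroup M] [Module A M]
    (B : Basis ι A M) {I : Ideal A} {x : M} :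
    x ∈ I • (⊤ : Submodule A M) ↔ ∀ i, B.repr x i ∈ I := by
  rw [← B.span_eq, Submodule.mem_ideal_smul_span_iff_exists_sum]
  constructor
  · rintro ⟨c, hc, rfl⟩
    simpa [← Finsupp.linearCombination_apply] using hc
  · exact fun h => ⟨B.repr x, h, B.linearCombination_repr x⟩

variable {K A S ι : Type*} [Field K] [CommRing A] [Algebra K A] [CommRing S] [Algebra K S]
  [Algebra A S] [IsScalarTower K A S] (B : Basis ι A S) (χ : A →ₐ[K] K)

noncomputable def mapCoord : S →ₗ[K] ι → K :=
  LinearMap.pi fun i => χ.toLinearMap ∘ₗ (B.coord i).restrictScalars K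

theorem ker_mapCoord :
    LinearMap.ker (B.mapCoord χ) = ((RingHom.ker χ).map (algebraMap A S)).restrictScalars K := by
  ext x
  rw [Submodule.restrictScalars_mem, ← Submodule.restrictScalars_mem A (Ideal.map _ _),
    ← Ideal.smul_top_eq_map, B.mem_ideal_smul_top_iff]
  simp [mapCoord, funext_iff]

theorem mapCoord_surjective [Fintype ι] : Function.Surjective (B.mapCoord χ) := fun v =>
  ⟨B.equivFun.symm fun i => algebraMap K A (v i), funext fun i => by
    simp only [mapCoord, LinearMap.pi_apply, LinearMap.coe_comp, Function.comp_apply,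
      LinearMap.coe_restrictScalars, Basis.coord_apply, ← Basis.equivFun_apply,
      LinearEquiv.apply_symm_apply, AlgHom.toLinearMap_apply, AlgHom.commutes,
      Algebra.algebraMap_self, RingHom.id_apply]⟩

noncomputable def quotientMapKer [Fintype ι] :
    Basis ι K (S ⧸ (RingHom.ker χ).map (algebraMap A S)) :=
  .ofEquivFun <| (Submodule.Quotient.restrictScalarsEquiv K _).symm ≪≫ₗ
    Submodule.quotEquivOfEq _ _ (B.ker_mapCoord χ).symm ≪≫ₗ
    (B.mapCoord χ).quotKerEquivOfSurjective (B.mapCoord_surjective χ)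

end Module.Basis

namespace MvPolynomial

theorem aeval_sub_aeval_mem_span {R S σ : Type*} [CommRing R] [CommRing S] [Algebra R S]
    (f g : σ → S) (p : MvPolynomial σ R) :
    aeval f p - aeval g p ∈ Ideal.span (Set.range fun i => f i - g i) := by
  induction p using MvPolynomial.induction_on with
  | C c => simp
  | add p q hp hq => simpa [add_sub_add_comm] using add_mem hp hq
  | mul_X p i hp =>
    have : aeval f (p * X i) - aeval g (p * X i)
        = (aeval f p - aeval g p) * f i + aeval g p * (f i - g i) := by simp; ring
    rw [this]
    exact add_mem (Ideal.mul_mem_right _ _ hp)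
      (Ideal.mul_mem_left _ _ (Ideal.subset_span ⟨i, rfl⟩))

variable {R σ : Type*} [CommRing R] [Fintype σ]

theorem sub_C_sub_sum_pderiv_mem_ker_eval_sq (b : σ → R) (p : MvPolynomial σ R) :
    p - C (eval b p) - ∑ j, C (eval b (pderiv j p)) * (X j - C (b j))
      ∈ RingHom.ker (eval b) ^ 2 := by
  classical
  induction p using MvPolynomial.induction_on with
  | C c => simp
  | add p q hp hq =>
    convert add_mem hp hq using 1
    simp only [map_add, add_mul, Finset.sum_add_distrib]
    ring
  | mul_X p i hp =>
    have hterm : ∀ j, C (eval b (pderiv j (p * X i))) * (X j - C (b j))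
        = C (b i) * (C (eval b (pderiv j p)) * (X j - C (b j)))
          + if j = i then C (eval b p) * (X i - C (b i)) else 0 := fun j => by
      rcases eq_or_ne j i with rfl | hj
      · simp only [Derivation.leibniz, pderiv_X_self, smul_eq_mul, map_add, map_mul, eval_X,
          map_one, if_pos]
        ring
      · simp only [Derivation.leibniz, pderiv_X_of_ne (Ne.symm hj), smul_eq_mul, map_add, map_mul,
          eval_X, map_zero, if_neg hj]
        ring
    have hsum : ∑ j, C (eval b (pderiv j (p * X i))) * (X j - C (b j))
        = C (b i) * ∑ j, C (eval b (pderiv j p)) * (X j - C (b j))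
          + C (eval b p) * (X i - C (b i)) := by
      simp only [hterm, Finset.sum_add_distrib, ← Finset.mul_sum, Finset.sum_ite_eq',
        Finset.mem_univ, if_true]
    rw [hsum, show p * X i - C (eval b (p * X i))
        - (C (b i) * ∑ j, C (eval b (pderiv j p)) * (X j - C (b j))
          + C (eval b p) * (X i - C (b i)))
        = C (b i) * (p - C (eval b p) - ∑ j, C (eval b (pderiv j p)) * (X j - C (b j)))
          + (p - C (eval b p)) * (X i - C (b i)) by simp; ring]
    refine add_mem (Ideal.mul_mem_left _ _ hp) ?_
    rw [sq]
    exact Ideal.mul_mem_mul (by simp [RingHom.mem_ker]) (by simp [RingHom.mem_ker])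

theorem ker_eval_le_span_sup_sq (b : σ → R) :
    RingHom.ker (eval b) ≤
      Ideal.span (Set.range fun j => X j - C (b j)) ⊔ RingHom.ker (eval b) ^ 2 := by
  intro p hp
  rw [RingHom.mem_ker] at hp
  have htaylor := sub_C_sub_sum_pderiv_mem_ker_eval_sq b p
  rw [hp, map_zero, sub_zero] at htaylor
  rw [← sub_add_cancel p (∑ j, C (eval b (pderiv j p)) * (X j - C (b j)))]
  exact add_mem (Ideal.mem_sup_right htaylor) (Ideal.mem_sup_left
    (Ideal.sum_mem _ fun j _ => Ideal.mul_mem_left _ _ (Ideal.subset_span ⟨j, rfl⟩)))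

theorem ker_eval_le_span_sup_sq_of_isUnit_det [DecidableEq σ] (Q : σ → MvPolynomial σ R)
    (b : σ → R) (h : IsUnit (eval b (Matrix.of fun i j => pderiv j (Q i)).det)) :
    RingHom.ker (eval b) ≤
      Ideal.span (Set.range fun i => Q i - C (eval b (Q i))) ⊔ RingHom.ker (eval b) ^ 2 := by
  set L := Ideal.span (Set.range fun i => Q i - C (eval b (Q i))) ⊔ RingHom.ker (eval b) ^ 2
  set jac := (eval b).mapMatrix (Matrix.of fun i j => pderiv j (Q i))
  set v : σ → MvPolynomial σ R := fun j => X j - C (b j)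
  have hjac : ∀ i, (C.mapMatrix jac *ᵥ v) i ∈ L := fun i => by
    have htaylor := sub_C_sub_sum_pderiv_mem_ker_eval_sq b (Q i)
    rw [sub_sub] at htaylor
    have hQi : Q i - C (eval b (Q i)) ∈ L := Ideal.mem_sup_left (Ideal.subset_span ⟨i, rfl⟩)
    have h2 : Q i - (C (eval b (Q i)) + ∑ j, C (eval b (pderiv j (Q i))) * (X j - C (b j)))
        ∈ L := Ideal.mem_sup_right htaylor
    convert sub_mem hQi h2 using 1
    simp only [Matrix.mulVec, dotProduct, RingHom.mapMatrix_apply, Matrix.map_apply, jac, v,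
      Matrix.of_apply]
    ring
  have hv : v = C.mapMatrix jac⁻¹ *ᵥ (C.mapMatrix jac *ᵥ v) := by
    rw [Matrix.mulVec_mulVec, ← map_mul, Matrix.nonsing_inv_mul _ (by rwa [← RingHom.map_det]),
      map_one, Matrix.one_mulVec]
  refine (ker_eval_le_span_sup_sq b).trans (sup_le (Ideal.span_le.2 ?_) le_sup_right)
  rintro _ ⟨j, rfl⟩
  change v j ∈ L
  rw [hv]
  exact Ideal.sum_mem _ fun i _ => Ideal.mul_mem_left _ _ (hjac i)

end MvPolynomial

theorem AlgebraicIndependent.map_ker_eq_span {K ι S : Type*} [CommRing K] [CommRing S]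
    [Algebra K S] {Q : ι → S} (hQ : AlgebraicIndependent K Q) (a : ι → K) :
    (RingHom.ker ((aeval a).comp hQ.aevalEquiv.symm.toAlgHom)).map
        (algebraMap (Algebra.adjoin K (Set.range Q)) S) =
      Ideal.span (Set.range fun i => Q i - algebraMap K S (a i)) := by
  refine le_antisymm (Ideal.map_le_iff_le_comap.2 fun c hc => ?_) (Ideal.span_le.2 ?_)
  · obtain ⟨p, rfl⟩ := hQ.aevalEquiv.surjective c
    have hp : aeval a p = 0 := by simpa using hc
    have := aeval_sub_aeval_mem_span (R := K) Q (fun i => algebraMap K S (a i)) p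
    rwa [show aeval (fun i => algebraMap K S (a i)) p = algebraMap K S (aeval a p) from
      (aeval_algebraMap_apply S a p), hp, map_zero, sub_zero, ← hQ.algebraMap_aevalEquiv] at this
  · rintro _ ⟨i, rfl⟩
    dsimp only
    have hi : Q i - algebraMap K S (a i) =
        algebraMap _ S (hQ.aevalEquiv (X i - C (a i))) := by
      simp
    rw [SetLike.mem_coe, hi]
    exact Ideal.mem_map_of_mem _ (by simp [RingHom.mem_ker])

namespace MvPolynomial

variable {K σ : Type*} [Field K] {I : Ideal (MvPolynomial σ K)}

theorem zeroLocus_span_range_sub_C {ι : Type*} (Q : ι → MvPolynomial σ K) (a : ι → K) :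
    zeroLocus K (Ideal.span (Set.range fun i => Q i - C (a i))) =
      {b | ∀ i, eval b (Q i) = a i} := by
  simp [zeroLocus_span, sub_eq_zero]

noncomputable def evalQuotient (b : zeroLocus K I) : (MvPolynomial σ K ⧸ I) →ₐ[K] K :=
  Ideal.Quotient.liftₐ I (aeval (b : σ → K)) (mem_zeroLocus_iff.1 b.2)

@[simp]
theorem evalQuotient_mk (b : zeroLocus K I) (p : MvPolynomial σ K) :
    evalQuotient b (Ideal.Quotient.mk I p) = eval (b : σ → K) p :=
  rfl

theorem evalQuotient_injective : Function.Injective (evalQuotient (I := I)) :=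
  fun b c h => Subtype.ext <| _root_.funext fun j => by
    simpa using DFunLike.congr_fun h (Ideal.Quotient.mk I (X j))

theorem finite_zeroLocus [Module.Finite K (MvPolynomial σ K ⧸ I)] : (zeroLocus K I).Finite :=
  have : Finite (zeroLocus K I) := Finite.of_injective _ evalQuotient_injective
  Set.toFinite _

theorem isCoprime_ker_eval_of_ne {b c : σ → K} (h : b ≠ c) :
    IsCoprime (RingHom.ker (eval b)) (RingHom.ker (eval c)) := by
  have hmax : ∀ b : σ → K, (RingHom.ker (eval b)).IsMaximal := fun b =>
    RingHom.ker_isMaximal_of_surjective _ fun x => ⟨C x, eval_C x⟩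
  refine Ideal.isCoprime_iff_sup_eq.2 ((hmax b).coprime_of_ne (hmax c) fun hbc => h ?_)
  funext j
  have : X j - C (b j) ∈ RingHom.ker (eval c) := hbc ▸ by simp [RingHom.mem_ker]
  simpa [RingHom.mem_ker, sub_eq_zero, eq_comm] using this

variable [Finite σ] [IsAlgClosed K]

theorem radical_eq_prod_ker_eval (hfin : (zeroLocus K I).Finite) :
    I.radical = ∏ b ∈ hfin.toFinset, RingHom.ker (eval b) := by
  rw [Ideal.prod_eq_iInf_of_pairwise_isCoprime fun b _ c _ h => isCoprime_ker_eval_of_ne h,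
    ← vanishingIdeal_zeroLocus_eq_radical (K := K)]
  ext p
  simp only [mem_vanishingIdeal_iff, Submodule.mem_iInf, Set.Finite.mem_toFinset, RingHom.mem_ker,
    aeval_eq_eval]

theorem isRadical_of_ker_eval_le_sup_sq (hfin : (zeroLocus K I).Finite)
    (h : ∀ b ∈ zeroLocus K I, RingHom.ker (eval b) ≤ I ⊔ RingHom.ker (eval b) ^ 2) :
    I.IsRadical := by
  refine Ideal.isRadical_of_radical_le_sup_sq ?_
  rw [radical_eq_prod_ker_eval hfin]
  exact Ideal.prod_le_sup_sq _ fun b hb => h b (hfin.mem_toFinset.1 hb)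

theorem finrank_quotient_le_ncard_zeroLocus (hI : I.IsRadical) (hfin : (zeroLocus K I).Finite)
    [Module.Finite K (MvPolynomial σ K ⧸ I)] :
    Module.finrank K (MvPolynomial σ K ⧸ I) ≤ (zeroLocus K I).ncard := by
  have := hfin.fintype
  let ev : (MvPolynomial σ K ⧸ I) →ₗ[K] zeroLocus K I → K :=
    LinearMap.pi fun b => (evalQuotient b).toLinearMap
  have hev : Function.Injective ev := by
    rw [← LinearMap.ker_eq_bot, Submodule.eq_bot_iff]
    rintro x hx
    obtain ⟨p, rfl⟩ := Ideal.Quotient.mk_surjective x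
    have hp : p ∈ vanishingIdeal K (zeroLocus K I) := fun b hb => by
      simpa [ev] using congr_fun hx ⟨b, hb⟩
    rw [vanishingIdeal_zeroLocus_eq_radical, hI.radical] at hp
    exact Ideal.Quotient.eq_zero_iff_mem.2 hp
  calc Module.finrank K (MvPolynomial σ K ⧸ I) ≤ Module.finrank K (zeroLocus K I → K) :=
        LinearMap.finrank_le_finrank_of_injective hev
    _ = (zeroLocus K I).ncard := by
        rw [Module.finrank_fintype_fun_eq_card, Set.ncard_eq_toFinset_card', Set.toFinset_card]

end MvPolynomial

namespace MulAction

variable {G X : Type*} [Group G] [MulAction G X] [Finite G]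

theorem ncard_le_card_mul_ncard_image_orbit {s : Set X} (hs : s.Finite) :
    s.ncard ≤ Nat.card G * (Quotient.mk (orbitRel G X) '' s).ncard := by
  have hT := hs.image (Quotient.mk (orbitRel G X))
  have hcover : s ⊆ (fun p : G × orbitRel.Quotient G X => p.1 • p.2.out) ''
      (Set.univ ×ˢ (Quotient.mk (orbitRel G X) '' s)) := fun x hx => by
    obtain ⟨g, hg⟩ := Quotient.exact (Quotient.out_eq (Quotient.mk (orbitRel G X) x)).symm
    exact ⟨(g, _), ⟨Set.mem_univ _, x, hx, rfl⟩, hg⟩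
  calc s.ncard ≤ _ := Set.ncard_le_ncard hcover ((Set.finite_univ.prod hT).image _)
    _ ≤ (Set.univ ×ˢ (Quotient.mk (orbitRel G X) '' s)).ncard :=
        Set.ncard_image_le (Set.finite_univ.prod hT)
    _ = _ := by rw [Set.ncard_prod, Set.ncard_univ]

theorem exists_pairwise_smul_ne {s : Set X} (hs : s.Finite) {d : ℕ}
    (hd : Nat.card G * d ≤ s.ncard) :
    ∃ b : Fin d → X, (∀ i, b i ∈ s) ∧ Pairwise fun i j => ∀ g : G, g • b i ≠ b j := by
  set T := Quotient.mk (orbitRel G X) '' s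
  have hT : d ≤ Nat.card T := by
    rw [Nat.card_coe_set_eq]
    exact Nat.le_of_mul_le_mul_left (hd.trans (ncard_le_card_mul_ncard_image_orbit hs))
      Nat.card_pos
  have := (hs.image (Quotient.mk (orbitRel G X))).fintype
  obtain ⟨e⟩ : Nonempty (Fin d ↪ T) :=
    Function.Embedding.nonempty_of_card_le (by simpa [Nat.card_eq_fintype_card] using hT)
  choose f hfs hf using fun ω : T => ω.2
  refine ⟨fun i => f (e i), fun i => hfs _, fun i j hij g (hg : g • f (e i) = f (e j)) =>
    hij (e.injective (Subtype.ext ?_))⟩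
  rw [← hf (e i), ← hf (e j), ← hg]
  exact (Quotient.sound (mem_orbit _ g)).symm

end MulAction

theorem stmt13_general {r : ℕ} (Q : Fin r → MvPolynomial (Fin r) ℂ)
    (hQ : AlgebraicIndependent ℂ Q)
    (G : Subgroup ((Fin r → ℂ) ≃ₗ[ℂ] (Fin r → ℂ))) [Finite G]
    (d N : ℕ) (hN : N = Nat.card G * d)
    (B : Module.Basis (Fin N) (Algebra.adjoin ℂ (Set.range Q)) (MvPolynomial (Fin r) ℂ))
    (a : Fin r → ℂ)
    (hJ : ∀ b ∈ {b : Fin r → ℂ | ∀ i, eval b (Q i) = a i},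
      eval b (Matrix.of fun i j : Fin r => pderiv j (Q i)).det ≠ 0) :
    ∃ b : Fin d → (Fin r → ℂ),
      (∀ i, ∀ j, eval (b i) (Q j) = a j) ∧
      Pairwise fun i j => ∀ g ∈ G, g (b i) ≠ b j := by
  set I := Ideal.span (Set.range fun i => Q i - C (a i))
  have hF : zeroLocus ℂ I = {b | ∀ i, eval b (Q i) = a i} := zeroLocus_span_range_sub_C Q a
  have hI : (RingHom.ker ((aeval a).comp hQ.aevalEquiv.symm.toAlgHom)).map
      (algebraMap _ _) = I := by
    simpa only [algebraMap_eq] using hQ.map_ker_eq_span a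
  let BI := (B.quotientMapKer _).map (Ideal.quotientEquivAlgOfEq ℂ hI).toLinearEquiv
  have := Module.Finite.of_basis BI
  have hfin : (zeroLocus ℂ I).Finite := finite_zeroLocus
  have hrad : I.IsRadical := isRadical_of_ker_eval_le_sup_sq hfin fun b hb => by
    have hb : ∀ i, eval b (Q i) = a i := hF.subset hb
    have hspan : Ideal.span (Set.range fun i => Q i - C (eval b (Q i))) = I := by
      simp only [hb, I]
    exact hspan ▸ ker_eval_le_span_sup_sq_of_isUnit_det Q b (isUnit_iff_ne_zero.2 (hJ b hb))
  have hcard : Nat.card G * d ≤ (zeroLocus ℂ I).ncard := by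
    rw [← hN, ← Fintype.card_fin N, ← Module.finrank_eq_card_basis BI]
    exact finrank_quotient_le_ncard_zeroLocus hrad hfin
  obtain ⟨b, hbF, hb⟩ := MulAction.exists_pairwise_smul_ne hfin hcard
  exact ⟨b, fun i => hF.subset (hbF i), fun i j hij g hg => hb hij ⟨g, hg⟩⟩

/-- Let `Q₁,…,Q_r` be algebraically independent with `ℂ[x₁,…,x_r]` free of rank
`N = |G|·d` over the subalgebra they generate, where `G` is a finite group of
linear automorphisms of `ℂ^r` leaving each `Q i` invariant as a polynomial
(`Q_i(g·x) = Q_i(x)`).  If the Jacobian determinant `det [∂Q_i/∂x_j]` is nonzero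
at every point of the fiber `F = {b : Q_i(b) = a_i for all i}`, then `F`
contains `d` points lying in pairwise distinct `G`-orbits. -/
theorem stmt13 {r : ℕ} (Q : Fin r → MvPolynomial (Fin r) ℂ)
    (hQ : AlgebraicIndependent ℂ Q)
    (G : Subgroup ((Fin r → ℂ) ≃ₗ[ℂ] (Fin r → ℂ))) [Finite G]
    (hGinv : ∀ g ∈ G, ∀ i,
      aeval (fun j => ∑ k, C (g (Pi.single k 1) j) * X k) (Q i) = Q i)
    (d N : ℕ) (hN : N = Nat.card G * d)
    (B : Module.Basis (Fin N) (Algebra.adjoin ℂ (Set.range Q)) (MvPolynomial (Fin r) ℂ))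
    (a : Fin r → ℂ)
    (hJ : ∀ b ∈ {b : Fin r → ℂ | ∀ i, eval b (Q i) = a i},
      eval b (Matrix.of fun i j : Fin r => pderiv j (Q i)).det ≠ 0) :
    ∃ b : Fin d → (Fin r → ℂ),
      (∀ i, ∀ j, eval (b i) (Q j) = a j) ∧
      Pairwise fun i j => ∀ g ∈ G, g (b i) ≠ b j :=
  stmt13_general Q hQ G d N hN B a hJ
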